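/- arXiv:2512.24266 — 2 statements merged into one kernel-verified Lean document; each statement's English description precedes it below -/
import Mathlib

section
/- The infinite dihedral group is just infinite. -/
def JustInfinite (G : Type*) [Group G] : Prop :=
  Infinite G ∧ ∀ N : Subgroup G, N.Normal → N ≠ ⊥ → Finite (G ⧸ N)

/-- The rotation elements of the infinite dihedral group, indexed by `ℤ`. -/
def R0 (i : ℤ) : DihedralGroup 0 := DihedralGroup.r (show ZMod 0 from i)

/-- The reflection elements of the infinite dihedral group, indexed by `ℤ`. -/
def SR0 (i : ℤ) : DihedralGroup 0 := DihedralGroup.sr (show ZMod 0 from i)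

lemma R0_mul_R0 (i j : ℤ) : R0 i * R0 j = R0 (i + j) := rfl
lemma SR0_mul_SR0 (i j : ℤ) : SR0 i * SR0 j = R0 (j - i) := rfl
lemma R0_mul_SR0 (i j : ℤ) : R0 i * SR0 j = SR0 (j - i) := rfl
lemma SR0_mul_R0 (i j : ℤ) : SR0 i * R0 j = SR0 (i + j) := rfl
lemma R0_inv (i : ℤ) : (R0 i)⁻¹ = R0 (-i) := rfl
lemma SR0_inv (i : ℤ) : (SR0 i)⁻¹ = SR0 i := rfl
lemma one_eq_R0 : (1 : DihedralGroup 0) = R0 0 := rfl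

lemma R0_pow (k : ℤ) (m : ℕ) : (R0 k) ^ m = R0 (m * k) := by
  induction m with
  | zero => simp [one_eq_R0]
  | succ m ih =>
      rw [pow_succ, ih, R0_mul_R0]
      congr 1
      push_cast
      ring

lemma R0_zpow (k m : ℤ) : (R0 k) ^ m = R0 (m * k) := by
  cases m with
  | ofNat m => simpa using R0_pow k m
  | negSucc m =>
      rw [zpow_negSucc, R0_pow, R0_inv]
      congr 1
      push_cast [Int.negSucc_eq]
      ring

lemma exists_case (g : DihedralGroup 0) : (∃ i, g = R0 i) ∨ (∃ i, g = SR0 i) := by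
  cases g with
  | r i => exact .inl ⟨i, rfl⟩
  | sr i => exact .inr ⟨i, rfl⟩

theorem stmt_4 : JustInfinite (DihedralGroup 0) := by
  constructor
  · infer_instance
  · intro N hN hbot
    -- Step 1: N contains a nontrivial rotation R0 k, k ≠ 0.
    obtain ⟨⟨g, hg⟩, hg1⟩ := Subgroup.ne_bot_iff_exists_ne_one.mp hbot
    have hne : g ≠ 1 := by
      intro h; apply hg1; ext; exact h
    have hk : ∃ k : ℤ, k ≠ 0 ∧ R0 k ∈ N := by
      rcases exists_case g with ⟨i, rfl⟩ | ⟨i, rfl⟩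
      · refine ⟨i, fun h => hne ?_, hg⟩
        rw [h, one_eq_R0]
      · -- conjugate SR0 i by R0 1 and multiply to get R0 2
        have h2 : R0 1 * SR0 i * (R0 1)⁻¹ ∈ N := hN.conj_mem _ hg (R0 1)
        rw [R0_inv, R0_mul_SR0, SR0_mul_R0] at h2
        -- h2 : R0 (-1 - (i-1)) = R0 (-i) ∈ N ... recompute below
        refine ⟨2, by norm_num, ?_⟩
        have h3 := N.mul_mem h2 hg
        rw [SR0_mul_SR0] at h3
        -- careful with arithmetic; normalize
        convert h3 using 2
        ring
    obtain ⟨k, hk0, hkN⟩ := hk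
    set n : ℕ := k.natAbs with hn
    have hn0 : n ≠ 0 := Int.natAbs_ne_zero.mpr hk0
    haveI : NeZero n := ⟨hn0⟩
    -- multiples of k give rotations in N
    have hmul : ∀ i : ℤ, k ∣ i → R0 i ∈ N := by
      rintro i ⟨m, rfl⟩
      have : R0 (k * m) = (R0 k) ^ m := by rw [R0_zpow]; congr 1; ring
      rw [this]
      exact N.zpow_mem hkN m
    have hdvd : ∀ i : ℤ, k ∣ (i - (((i : ZMod n).val : ℤ))) := by
      intro i
      rw [← Int.natAbs_dvd, ← hn, ← ZMod.intCast_zmod_eq_zero_iff_dvd]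
      push_cast
      simp [ZMod.natCast_val, ZMod.cast_id]
    -- Step 2: surjection from a finite type onto the quotient
    apply Finite.of_surjective
      (f := fun p : ZMod n × Bool =>
        (QuotientGroup.mk (if p.2 then SR0 (p.1.val : ℤ) else R0 (p.1.val : ℤ)) :
          DihedralGroup 0 ⧸ N))
    intro x
    induction x using QuotientGroup.induction_on with
    | H g =>
      rcases exists_case g with ⟨i, rfl⟩ | ⟨i, rfl⟩
      · refine ⟨((i : ZMod n), false), ?_⟩
        simp only [Bool.false_eq_true, if_false]
        rw [QuotientGroup.eq]
        rw [R0_inv, R0_mul_R0]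
        have := hmul _ (hdvd i)
        convert this using 2
        ring
      · refine ⟨((i : ZMod n), true), ?_⟩
        simp only [if_true]
        rw [QuotientGroup.eq]
        rw [SR0_inv, SR0_mul_SR0]
        have := hmul _ (hdvd i)
        convert this using 2
end

section
/- Let G be a finitely generated group with a recursively enumerable presentation, and suppose G is simple and nontrivial. Then the word problem for G is decidable (Kuznetsov's theorem). -/
/-!
Membership in the normal closure `N` of an r.e. set `R` is r.e.: `w ∈ N` iff `w` equals, in the
free group, a product of conjugates of relators and their inverses, and such a certificate can be
searched for. Since `F ⧸ N` is simple and nontrivial, fix `x ∉ N`. If `w ∉ N`, the normal closure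
of `R ∪ {w}` strictly contains `N`, hence is everything and contains `x`; if `w ∈ N` it is `N`.
So `w ∉ N` iff `x` lies in the normal closure of `R ∪ {w}`, which is again r.e., uniformly in `w`.
A predicate that is r.e. and co-r.e. is decidable.
-/

namespace REPred

open Filter Nat.Partrec.Code

variable {α β : Type*} [Primcodable α] [Primcodable β]

theorem of_exists_primrec {f : α → β → Bool} (hf : Primrec₂ f) :
    REPred fun a => ∃ b, f a b = true := by
  let g (a : α) (n : ℕ) : Bool := ((Encodable.decode (α := β) n).map (f a)).getD false
  have hg : Primrec₂ g :=
    Primrec.option_getD.comp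
      (Primrec.option_map (Primrec.decode.comp Primrec.snd)
        (hf.comp (Primrec.fst.comp Primrec.fst) Primrec.snd))
      (Primrec.const false)
  refine (Partrec.rfind hg.to_comp.partrec₂).dom_re.of_eq fun a => Nat.rfind_dom.trans ?_
  constructor
  · rintro ⟨n, hn, -⟩
    rcases hb : Encodable.decode (α := β) n with - | b
    · simp [g, hb] at hn
    · exact ⟨b, by simpa [g, hb] using hn⟩
  · rintro ⟨b, hb⟩
    exact ⟨Encodable.encode b, by simp [g, hb], fun _ => trivial⟩

/-- Stated with `∀ᶠ` rather than `∃ n` so that finitely many searches can share a common bound. -/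
theorem exists_primrec_eventually {p : α → Prop} (hp : REPred p) :
    ∃ f : α → ℕ → Bool, Primrec₂ f ∧
      ∀ a, (p a → ∀ᶠ n in atTop, f a n = true) ∧ ∀ n, f a n = true → p a := by
  obtain ⟨c, hc⟩ := exists_code.1 hp
  have hdom (a : α) : p a ↔ ∃ x n, x ∈ evaln n c (Encodable.encode a) := by
    simp_rw [← evaln_complete, ← Part.dom_iff_mem, hc]
    simp only [Encodable.encodek, Part.coe_some, Part.bind_some, Part.map_Dom]
    exact ⟨fun h => ⟨h, trivial⟩, fun h => h.fst⟩
  refine ⟨fun a n => (evaln n c (Encodable.encode a)).isSome, ?_, fun a => ⟨fun h => ?_, ?_⟩⟩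
  · exact Primrec.option_isSome.comp (primrec_evaln.comp
      ((Primrec.snd.pair (Primrec.const c)).pair (Primrec.encode.comp Primrec.fst)))
  · obtain ⟨x, n, hx⟩ := (hdom a).1 h
    exact eventually_atTop.2 ⟨n, fun m hm => Option.isSome_iff_exists.2 ⟨x, evaln_mono hm hx⟩⟩
  · intro n hn
    obtain ⟨x, hx⟩ := Option.isSome_iff_exists.1 hn
    exact (hdom a).2 ⟨x, n, hx⟩

protected theorem comp {p : β → Prop} (hp : REPred p) {f : α → β} (hf : Computable f) :
    REPred fun a => p (f a) :=
  Partrec.comp hp hf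

protected theorem _root_.REPred.exists {p : α → β → Prop}
    (hp : REPred fun x : α × β => p x.1 x.2) : REPred fun a => ∃ b, p a b := by
  obtain ⟨f, hf, hfp⟩ := hp.exists_primrec_eventually
  refine (of_exists_primrec (f := fun a (bn : β × ℕ) => f (a, bn.1) bn.2)
    (hf.comp (Primrec.fst.pair (Primrec.fst.comp Primrec.snd))
      (Primrec.snd.comp Primrec.snd))).of_eq
    fun a => ⟨fun ⟨bn, h⟩ => ⟨bn.1, (hfp _).2 _ h⟩, fun ⟨b, h⟩ => ?_⟩
  obtain ⟨n, hn⟩ := ((hfp (a, b)).1 h).exists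
  exact ⟨(b, n), hn⟩

protected theorem or {p q : α → Prop} (hp : REPred p) (hq : REPred q) :
    REPred fun a => p a ∨ q a := by
  obtain ⟨f, hf, hfp⟩ := hp.exists_primrec_eventually
  obtain ⟨g, hg, hgq⟩ := hq.exists_primrec_eventually
  refine (of_exists_primrec (Primrec.or.comp₂ hf hg)).of_eq fun a => ⟨fun ⟨n, h⟩ => ?_, ?_⟩
  · rcases Bool.or_eq_true_iff.1 h with h | h
    exacts [.inl ((hfp a).2 n h), .inr ((hgq a).2 n h)]
  · rintro (h | h)
    · exact ((hfp a).1 h).exists.imp fun n hn => by simp [hn]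
    · exact ((hgq a).1 h).exists.imp fun n hn => by simp [hn]

protected theorem and {p q : α → Prop} (hp : REPred p) (hq : REPred q) :
    REPred fun a => p a ∧ q a := by
  obtain ⟨f, hf, hfp⟩ := hp.exists_primrec_eventually
  obtain ⟨g, hg, hgq⟩ := hq.exists_primrec_eventually
  refine (of_exists_primrec (Primrec.and.comp₂ hf hg)).of_eq fun a => ⟨fun ⟨n, h⟩ => ?_, ?_⟩
  · rw [Bool.and_eq_true] at h
    exact ⟨(hfp a).2 n h.1, (hgq a).2 n h.2⟩
  · rintro ⟨hpa, hqa⟩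
    exact (((hfp a).1 hpa).and ((hgq a).1 hqa)).exists.imp fun n hn => by simp [hn]

theorem forall_mem_list {p : α → β → Prop} (hp : REPred fun x : α × β => p x.1 x.2) :
    REPred fun x : α × List β => ∀ b ∈ x.2, p x.1 b := by
  obtain ⟨f, hf, hfp⟩ := hp.exists_primrec_eventually
  have hall : Primrec₂ fun (x : α × List β) (n : ℕ) => x.2.all fun b => f (x.1, b) n := by
    have hstep : Primrec₂ fun (y : (α × List β) × ℕ) (bs : β × Bool) =>
        f (y.1.1, bs.1) y.2 && bs.2 :=
      Primrec.and.comp (hf.comp ((Primrec.fst.comp (Primrec.fst.comp Primrec.fst)).pair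
          (Primrec.fst.comp Primrec.snd)) (Primrec.snd.comp Primrec.fst))
        (Primrec.snd.comp Primrec.snd)
    refine (Primrec.list_foldr (Primrec.snd.comp Primrec.fst) (Primrec.const true) hstep).of_eq
      fun ⟨⟨a, l⟩, n⟩ => ?_
    dsimp only
    induction l with
    | nil => rfl
    | cons b l ih => rw [List.foldr_cons, ih, List.all_cons]
  refine (of_exists_primrec hall).of_eq fun x => ⟨fun ⟨n, h⟩ b hb => ?_, fun h => ?_⟩
  · exact (hfp _).2 n (List.all_eq_true.1 h b hb)
  · have := (x.2.finite_toSet.eventually_all).2 fun b hb => (hfp (x.1, b)).1 (h b hb)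
    exact this.exists.imp fun n hn => List.all_eq_true.2 hn

end REPred

namespace Subgroup

variable {G : Type*} [Group G]

theorem mem_normalClosure_iff_exists_list {s : Set G} {g : G} :
    g ∈ normalClosure s ↔ ∃ L : List (G × G),
      (∀ e ∈ L, e.2 ∈ s ∨ e.2⁻¹ ∈ s) ∧ (L.map fun e => e.1 * e.2 * e.1⁻¹).prod = g := by
  constructor
  · intro hg
    induction hg using closure_induction with
    | mem x hx =>
      obtain ⟨r, hr, hconj⟩ := Group.mem_conjugatesOfSet_iff.1 hx
      obtain ⟨c, rfl⟩ := isConj_iff.1 hconj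
      exact ⟨[(c, r)], by simp [hr]⟩
    | one => exact ⟨[], by simp⟩
    | mul x y _ _ hx hy =>
      obtain ⟨L, hL, rfl⟩ := hx
      obtain ⟨M, hM, rfl⟩ := hy
      refine ⟨L ++ M, fun e he => ?_, by simp⟩
      rcases List.mem_append.1 he with he | he
      exacts [hL e he, hM e he]
    | inv x _ hx =>
      obtain ⟨L, hL, rfl⟩ := hx
      refine ⟨(L.map fun e => (e.1, e.2⁻¹)).reverse, ?_, ?_⟩
      · simp only [List.mem_reverse, List.mem_map]
        rintro _ ⟨e, he, rfl⟩
        simpa [or_comm] using hL e he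
      · simp [List.prod_inv_reverse, Function.comp_def, mul_assoc]
  · rintro ⟨L, hL, rfl⟩
    refine list_prod_mem fun x hx => ?_
    obtain ⟨⟨c, r⟩, he, rfl⟩ := List.mem_map.1 hx
    refine normalClosure_normal.conj_mem r ?_ c
    rcases hL _ he with hr | hr
    · exact subset_normalClosure hr
    · simpa using inv_mem (subset_normalClosure hr)

theorem Normal.eq_top_of_lt {N H : Subgroup G} [N.Normal] [IsSimpleGroup (G ⧸ N)]
    (hH : H.Normal) (hNH : N < H) : H = ⊤ := by
  obtain ⟨g, hgH, hgN⟩ := SetLike.exists_of_lt hNH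
  rcases (hH.map _ (QuotientGroup.mk'_surjective N)).eq_bot_or_eq_top with hbot | htop
  · refine absurd ((QuotientGroup.eq_one_iff g).1 ?_) hgN
    exact mem_bot.1 (hbot ▸ mem_map_of_mem _ hgH)
  · have hker : (QuotientGroup.mk' N).ker ≤ H := by rw [QuotientGroup.ker_mk']; exact hNH.le
    rw [← comap_map_eq_self hker, htop, comap_top]

theorem mem_normalClosure_insert_iff {s : Set G} [IsSimpleGroup (G ⧸ normalClosure s)]
    {x : G} (hx : x ∉ normalClosure s) (g : G) :
    x ∈ normalClosure (insert g s) ↔ g ∉ normalClosure s := by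
  constructor
  · intro hxg hg
    exact hx (normalClosure_le_normal (Set.insert_subset hg subset_normalClosure) hxg)
  · intro hg
    have hlt : normalClosure s < normalClosure (insert g s) :=
      SetLike.lt_iff_le_and_exists.2 ⟨normalClosure_mono (Set.subset_insert g s),
        g, subset_normalClosure (Set.mem_insert g s), hg⟩
    rw [Normal.eq_top_of_lt normalClosure_normal hlt]
    exact mem_top x

end Subgroup

namespace FreeGroup

variable {ι : Type*}

theorem mk_flatMap_conj (L : List (List (ι × Bool) × List (ι × Bool))) :
    mk (L.flatMap fun e => e.1 ++ e.2 ++ invRev e.1) =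
      (L.map fun e => mk e.1 * mk e.2 * (mk e.1)⁻¹).prod := by
  induction L with
  | nil => rfl
  | cons e L ih =>
    rw [List.flatMap_cons, List.map_cons, List.prod_cons, ← ih, ← mul_mk, ← mul_mk, ← mul_mk,
      inv_mk]

theorem mk_mem_normalClosure_iff_exists_list [DecidableEq ι] {S : Set (FreeGroup ι)}
    {w : List (ι × Bool)} :
    mk w ∈ Subgroup.normalClosure S ↔ ∃ L : List (List (ι × Bool) × List (ι × Bool)),
      (∀ e ∈ L, mk e.2 ∈ S ∨ mk (invRev e.2) ∈ S) ∧
        mk (L.flatMap fun e => e.1 ++ e.2 ++ invRev e.1) = mk w := by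
  rw [Subgroup.mem_normalClosure_iff_exists_list]
  constructor
  · rintro ⟨L, hL, hprod⟩
    refine ⟨L.map fun e => (e.1.toWord, e.2.toWord),
      List.forall_mem_map.2 fun e he => by simp only [← inv_mk, mk_toWord]; exact hL e he, ?_⟩
    rw [mk_flatMap_conj, ← hprod, List.map_map]
    simp only [Function.comp_def, mk_toWord]
  · rintro ⟨L, hL, hprod⟩
    refine ⟨L.map fun e => (mk e.1, mk e.2),
      List.forall_mem_map.2 fun e he => by simpa [inv_mk] using hL e he, ?_⟩
    rw [← hprod, mk_flatMap_conj, List.map_map]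
    rfl

theorem primrec_invRev [Primcodable ι] : Primrec (invRev : List (ι × Bool) → List (ι × Bool)) :=
  (Primrec.list_reverse.comp (Primrec.list_map Primrec.id
    ((Primrec.fst.comp Primrec.snd).pair
      (Primrec.not.comp (Primrec.snd.comp Primrec.snd))).to₂)).of_eq
    fun w => by simp [invRev]

theorem primrec_reduce [Primcodable ι] [DecidableEq ι] :
    Primrec (reduce : List (ι × Bool) → List (ι × Bool)) := by
  have hcancel : PrimrecRel fun (x y : ι × Bool) => x.1 = y.1 ∧ x.2 = !y.2 :=
    (Primrec.eq.comp (Primrec.fst.comp Primrec.fst) (Primrec.fst.comp Primrec.snd)).and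
      (Primrec.eq.comp (Primrec.snd.comp Primrec.fst)
        (Primrec.not.comp (Primrec.snd.comp Primrec.snd)))
  exact (Primrec.list_rec Primrec.id (Primrec.const [])
    (Primrec.list_casesOn (Primrec.snd.comp (Primrec.snd.comp Primrec.snd))
      (Primrec.list_cons.comp (Primrec.fst.comp Primrec.snd) (Primrec.const []))
      (Primrec.ite
        (hcancel.comp (Primrec.fst.comp (Primrec.snd.comp Primrec.fst))
          (Primrec.fst.comp Primrec.snd))
        (Primrec.snd.comp Primrec.snd)
        (Primrec.list_cons.comp (Primrec.fst.comp (Primrec.snd.comp Primrec.fst))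
          (Primrec.list_cons.comp (Primrec.fst.comp Primrec.snd)
            (Primrec.snd.comp Primrec.snd)))).to₂).to₂).of_eq fun _ => rfl

theorem primrecRel_mk_eq [Primcodable ι] [DecidableEq ι] :
    PrimrecRel fun u v : List (ι × Bool) => mk u = mk v :=
  (Primrec.eq.comp (primrec_reduce.comp Primrec.fst) (primrec_reduce.comp Primrec.snd)).of_eq
    fun _ => ⟨reduce.exact, reduce.sound⟩

theorem rePred_mk_mem_normalClosure {α : Type*} [Primcodable α] [Primcodable ι] [DecidableEq ι]
    {S : α → Set (FreeGroup ι)} (hS : REPred fun x : α × List (ι × Bool) => mk x.2 ∈ S x.1) :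
    REPred fun x : α × List (ι × Bool) => mk x.2 ∈ Subgroup.normalClosure (S x.1) := by
  have hrel : REPred fun y : (α × List (ι × Bool)) × List (List (ι × Bool) × List (ι × Bool)) =>
      (∀ e ∈ y.2, mk e.2 ∈ S y.1.1 ∨ mk (invRev e.2) ∈ S y.1.1) ∧
        mk (y.2.flatMap fun e => e.1 ++ e.2 ++ invRev e.1) = mk y.1.2 := by
    refine .and (REPred.forall_mem_list (p := fun (x : α × List (ι × Bool))
      (e : List (ι × Bool) × List (ι × Bool)) => mk e.2 ∈ S x.1 ∨ mk (invRev e.2) ∈ S x.1)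
      (.or ?_ ?_)) (PrimrecPred.computablePred ?_).to_re
    · exact hS.comp ((Computable.fst.comp Computable.fst).pair (Computable.snd.comp Computable.snd))
    · exact hS.comp ((Computable.fst.comp Computable.fst).pair
        (primrec_invRev.to_comp.comp (Computable.snd.comp Computable.snd)))
    · exact primrecRel_mk_eq.comp (Primrec.list_flatMap Primrec.snd
        (Primrec.list_append.comp (Primrec.list_append.comp (Primrec.fst.comp Primrec.snd)
          (Primrec.snd.comp Primrec.snd)) (primrec_invRev.comp (Primrec.fst.comp Primrec.snd))))
        (Primrec.snd.comp Primrec.fst)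
  exact (REPred.exists hrel).of_eq fun x => mk_mem_normalClosure_iff_exists_list.symm

end FreeGroup

open FreeGroup

/-- Kuznetsov's theorem: a finitely generated, recursively presented simple group
has decidable word problem. -/
theorem stmt_8 {k : ℕ} (R : Set (FreeGroup (Fin k)))
    (hR : REPred (fun w : List (Fin k × Bool) => FreeGroup.mk w ∈ R))
    (hsimple : IsSimpleGroup (FreeGroup (Fin k) ⧸ Subgroup.normalClosure R)) :
    ComputablePred (fun w : List (Fin k × Bool) =>
      FreeGroup.mk w ∈ Subgroup.normalClosure R) := by
  set N := Subgroup.normalClosure R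
  obtain ⟨x, hx⟩ : ∃ x : FreeGroup (Fin k), x ∉ N := by
    obtain ⟨g, hg⟩ := exists_ne (1 : FreeGroup (Fin k) ⧸ N)
    obtain ⟨x, rfl⟩ := QuotientGroup.mk_surjective g
    exact ⟨x, mt (QuotientGroup.eq_one_iff x).2 hg⟩
  have hpos : REPred fun w : List (Fin k × Bool) => mk w ∈ N :=
    (rePred_mk_mem_normalClosure (S := fun _ : Unit => R) (hR.comp Computable.snd)).comp
      ((Computable.const ()).pair Computable.id)
  have hinsert : REPred fun y : List (Fin k × Bool) × List (Fin k × Bool) =>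
      mk y.2 ∈ insert (mk y.1) R :=
    (primrecRel_mk_eq.comp Primrec.snd Primrec.fst).computablePred.to_re.or
      (hR.comp Computable.snd)
  have hneg : REPred fun w : List (Fin k × Bool) => mk w ∉ N :=
    ((rePred_mk_mem_normalClosure (S := fun w => insert (mk w) R) hinsert).comp
      (Computable.id.pair (Computable.const x.toWord))).of_eq fun w => by
        rw [mk_toWord]
        exact Subgroup.mem_normalClosure_insert_iff hx (mk w)
  exact ComputablePred.computable_iff_re_compl_re'.2 ⟨hpos, hneg⟩
end
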